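/- arXiv:1606.07997 — 5 statements merged into one kernel-verified Lean document; each statement's English description precedes it below -/
import Mathlib

section
/- Let t : ℕ → ℝ satisfy t h ≥ 0 for all h, t h = 0 for h < 5, with (t h) and (h·t h) summable, ∑_h t h = 1 and ∑_h h·t h ≤ 6, and set e = (1/2)·∑_h h·t h and v = e - 1. Then 3/2 ≤ v ≤ 2. (Proposition 7: for a strongly balanced tiling 𝔗 by convex pentagons, the limit number of vertices per tile satisfies 3/2 ≤ v(𝔗) ≤ 2.) -/
/-- Proposition 7: for a strongly balanced tiling by convex pentagons, the
limit number of vertices per tile satisfies 3/2 ≤ v ≤ 2. -/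
theorem prop7 (t : ℕ → ℝ) (hpos : ∀ h, 0 ≤ t h) (hlow : ∀ h, h < 5 → t h = 0)
    (hsum : Summable t) (hsum' : Summable fun h : ℕ => (h : ℝ) * t h)
    (htot : ∑' h, t h = 1) (havg : ∑' h : ℕ, (h : ℝ) * t h ≤ 6)
    (e v : ℝ) (he : e = (1 / 2) * ∑' h : ℕ, (h : ℝ) * t h) (hv : v = e - 1) :
    3 / 2 ≤ v ∧ v ≤ 2 := by
  have hge : (5 : ℝ) ≤ ∑' h : ℕ, (h : ℝ) * t h := by
    have h1 : ∑' h : ℕ, (5 : ℝ) * t h ≤ ∑' h : ℕ, (h : ℝ) * t h := by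
      apply Summable.tsum_le_tsum _ (hsum.mul_left 5) hsum'
      intro h
      rcases lt_or_ge h 5 with hh | hh
      · simp [hlow h hh]
      · exact mul_le_mul_of_nonneg_right (by exact_mod_cast hh) (hpos h)
    rwa [tsum_mul_left, htot, mul_one] at h1
  constructor <;> [nlinarith; nlinarith]
end

section
/- Let t : ℕ → ℝ satisfy t h ≥ 0 for all h, t h = 0 for h < 5, with (t h) and (h·t h) summable, ∑_h t h = 1 and ∑_h h·t h ≤ 6. If there exists h ≥ 7 with t h > 0, then t 5 > 0. (Theorem 2: a strongly balanced tiling by convex pentagons satisfying ∑_{h≥7} t_h > 0 contains a convex pentagon whose number of adjacents is five.) -/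
/-!
Weight each class of tiles by its excess `h - 6` over the admissible average. The total weighted
excess `∑ (h - 6) t_h = ∑ h t_h - 6 ∑ t_h` is at most `0`. If `t 5 = 0`, then `t h = 0` for all
`h ≤ 5`, so every term of that sum is nonnegative, while the term of some `h ≥ 7` is positive.
-/

section WeightedExcess

variable {ι : Type*} {t g : ι → ℝ}

theorem Summable.sub_const_mul_weight (ht : Summable t) (hgt : Summable fun i => g i * t i)
    (c : ℝ) : Summable fun i => (g i - c) * t i := by
  simpa only [sub_mul] using hgt.sub (ht.mul_left c)

theorem tsum_sub_const_mul_weight (ht : Summable t) (hgt : Summable fun i => g i * t i)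
    (c : ℝ) : ∑' i, (g i - c) * t i = ∑' i, g i * t i - c * ∑' i, t i := by
  simp only [sub_mul]
  rw [hgt.tsum_sub (ht.mul_left c), tsum_mul_left]

end WeightedExcess

theorem sub_six_mul_nonneg {t : ℕ → ℝ} (hpos : ∀ h, 0 ≤ t h)
    (hlow : ∀ h, h < 5 → t h = 0) (h5 : t 5 = 0) (h : ℕ) : 0 ≤ ((h : ℝ) - 6) * t h := by
  rcases lt_or_ge h 5 with hlt | hge
  · simp [hlow h hlt]
  rcases hge.eq_or_lt with rfl | hgt
  · simp [h5]
  have : (6 : ℝ) ≤ h := by exact_mod_cast hgt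
  exact mul_nonneg (by linarith) (hpos h)

/-- Theorem 2: a strongly balanced tiling by convex pentagons with a positive
fraction of tiles having at least 7 adjacents contains a pentagon with exactly
five adjacents. -/
theorem thm2 (t : ℕ → ℝ) (hpos : ∀ h, 0 ≤ t h) (hlow : ∀ h, h < 5 → t h = 0)
    (hsum : Summable t) (hsum' : Summable fun h : ℕ => (h : ℝ) * t h)
    (htot : ∑' h, t h = 1) (havg : ∑' h : ℕ, (h : ℝ) * t h ≤ 6)
    (hbig : ∃ h, 7 ≤ h ∧ t h > 0) :
    t 5 > 0 := by
  by_contra! h5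
  have hexcess_nonneg :=
    sub_six_mul_nonneg hpos hlow (le_antisymm h5 (hpos 5))
  obtain ⟨k, hk, hk_pos⟩ := hbig
  have hterm_le : ((k : ℝ) - 6) * t k ≤ ∑' h : ℕ, ((h : ℝ) - 6) * t h :=
    (hsum.sub_const_mul_weight hsum' 6).le_tsum k fun j _ => hexcess_nonneg j
  rw [tsum_sub_const_mul_weight hsum hsum', htot] at hterm_le
  have hk' : (7 : ℝ) ≤ k := by exact_mod_cast hk
  nlinarith
end

section
/- Let v : ℕ → ℝ satisfy v j = 0 for j < 3, with (v j) and (j·v j) summable, and let e be a real number such that e = (∑_j v j) + 1 and 2e = ∑_j j·v j. Then v 3 = 2 + ∑_{j≥4} (2-j)·v j. (Proposition 11: in a strongly balanced tiling by convex pentagons, v_3 = 2 + ∑_{j≥4} (2-j)·v_j.) -/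
/-- Proposition 11: in a strongly balanced tiling by convex pentagons,
v_3 = 2 + ∑_{j≥4} (2-j)·v_j. -/
theorem prop11 (v : ℕ → ℝ) (hlow : ∀ j, j < 3 → v j = 0)
    (hsum : Summable v) (hsum' : Summable fun j : ℕ => (j : ℝ) * v j)
    (e : ℝ) (he : e = (∑' j, v j) + 1) (he2 : 2 * e = ∑' j : ℕ, (j : ℝ) * v j) :
    v 3 = 2 + ∑' j : ℕ, (if 4 ≤ j then (2 - (j : ℝ)) * v j else 0) := by
  have hf : Summable (fun j : ℕ => (2 - (j : ℝ)) * v j) := by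
    have := (hsum.mul_left 2).sub hsum'
    simpa [sub_mul] using this
  have hfsum : (∑' j : ℕ, (2 - (j : ℝ)) * v j) = -2 := by
    have h1 : (∑' j : ℕ, (2 - (j : ℝ)) * v j)
        = (∑' j : ℕ, 2 * v j) - ∑' j : ℕ, (j : ℝ) * v j := by
      rw [← Summable.tsum_sub (hsum.mul_left 2) hsum']
      congr 1; ext j; ring
    rw [h1, tsum_mul_left, ← he2, he]; ring
  set h : ℕ → ℝ := fun j => if 4 ≤ j then 0 else (2 - (j : ℝ)) * v j with hh'
  have hh : Summable h := by
    apply summable_of_ne_finset_zero (s := Finset.range 4)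
    intro j hj
    simp only [Finset.mem_range, not_lt] at hj
    simp [hh', hj]
  have hhsum : (∑' j, h j) = -(v 3) := by
    rw [tsum_eq_sum (s := Finset.range 4)
      (by intro j hj; simp only [Finset.mem_range, not_lt] at hj; simp [hh', hj])]
    have h0 := hlow 0 (by norm_num)
    have h1 := hlow 1 (by norm_num)
    have h2 := hlow 2 (by norm_num)
    simp [hh', Finset.sum_range_succ, h0, h1, h2]
    ring
  have hgs : (∑' j : ℕ, (if 4 ≤ j then (2 - (j : ℝ)) * v j else 0))
      = (∑' j : ℕ, (2 - (j : ℝ)) * v j) - ∑' j, h j := by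
    rw [← Summable.tsum_sub hf hh]
    congr 1; ext j
    by_cases hj : 4 ≤ j <;> simp [hh', hj]
  rw [hgs, hfsum, hhsum]; ring
end

section
/- Let t, v : ℕ → ℝ satisfy t h = 0 for h < 5 and v j = 0 for j < 3, with (t h), (h·t h), (v j), (j·v j) summable, and suppose 2·∑_j (j-3)·v j + ∑_h (h-6)·t h = 0 and ∑_j (j-4)·v j + ∑_h (h-4)·t h = 0. Then ∑_j v j = (1/2)·∑_h (h-2)·t h. (Proposition 13: in a strongly balanced tiling 𝔗 by convex pentagons, v(𝔗) = (1/2)·∑_{h≥5} (h-2)·t_h(𝔗).) -/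
lemma split_tsum (f : ℕ → ℝ) (c : ℝ) (hf : Summable f)
    (hf' : Summable fun n : ℕ => (n : ℝ) * f n) :
    (∑' n : ℕ, ((n : ℝ) - c) * f n)
      = (∑' n : ℕ, (n : ℝ) * f n) - c * ∑' n, f n := by
  have : (∑' n : ℕ, ((n : ℝ) - c) * f n)
      = ∑' n : ℕ, ((n : ℝ) * f n - c * f n) := by
    congr 1; ext n; ring
  rw [this, Summable.tsum_sub hf' (hf.mul_left c), hf.tsum_mul_left]

/-- Proposition 13: in a strongly balanced tiling by convex pentagons,
v = (1/2)·∑_{h≥5} (h-2)·t_h. -/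
theorem prop13 (t v : ℕ → ℝ) (htlow : ∀ h, h < 5 → t h = 0)
    (hvlow : ∀ j, j < 3 → v j = 0)
    (hts : Summable t) (hts' : Summable fun h : ℕ => (h : ℝ) * t h)
    (hvs : Summable v) (hvs' : Summable fun j : ℕ => (j : ℝ) * v j)
    (heq1 : 2 * (∑' j : ℕ, ((j : ℝ) - 3) * v j) + (∑' h : ℕ, ((h : ℝ) - 6) * t h) = 0)
    (heq2 : (∑' j : ℕ, ((j : ℝ) - 4) * v j) + (∑' h : ℕ, ((h : ℝ) - 4) * t h) = 0) :
    (∑' j, v j) = (1 / 2) * ∑' h : ℕ, ((h : ℝ) - 2) * t h := by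
  rw [split_tsum v 3 hvs hvs', split_tsum t 6 hts hts'] at heq1
  rw [split_tsum v 4 hvs hvs', split_tsum t 4 hts hts'] at heq2
  rw [split_tsum t 2 hts hts']
  linarith
end

section
/- Let v : ℕ → ℝ satisfy v j = 0 for j < 3, with (v j) and (j·v j) summable, and let e be a real number with e = (∑_j v j) + 1 and 2e = ∑_j j·v j. Then ∑_j v j = 2 - ∑_{j≥4} (j-3)·v j. (Proposition 16: in a strongly balanced tiling 𝔗 by convex pentagons, v(𝔗) = 2 - ∑_{j≥4} (j-3)·v_j(𝔗).) -/
/-- Proposition 16: in a strongly balanced tiling by convex pentagons,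
v = 2 - ∑_{j≥4} (j-3)·v_j. -/
theorem prop16 (v : ℕ → ℝ) (hlow : ∀ j, j < 3 → v j = 0)
    (hsum : Summable v) (hsum' : Summable fun j : ℕ => (j : ℝ) * v j)
    (e : ℝ) (he : e = (∑' j, v j) + 1) (he2 : 2 * e = ∑' j : ℕ, (j : ℝ) * v j) :
    (∑' j, v j) = 2 - ∑' j : ℕ, (if 4 ≤ j then ((j : ℝ) - 3) * v j else 0) := by
  have hfun : ∀ j : ℕ, (if 4 ≤ j then ((j : ℝ) - 3) * v j else 0)
      = (j : ℝ) * v j - 3 * v j := by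
    intro j
    by_cases h : 4 ≤ j
    · simp [h]; ring
    · interval_cases j <;> simp [hlow 0 (by norm_num), hlow 1 (by norm_num),
        hlow 2 (by norm_num)]
  rw [tsum_congr hfun, Summable.tsum_sub hsum' (hsum.mul_left 3), tsum_mul_left]
  linarith
end
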